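/- Let p ≥ 0 and set n = 2p + 1. Then for every i with 0 ≤ i ≤ p and every r > 0, (L_n^{p+1} ψ̄_i)(r) = 0. -/
import Mathlib

/-- The sequence of functions `ψ̄_i : ℝ → ℝ` defined inductively by
`ψ̄_0(r) = exp(r)` and `ψ̄_{i+1}(r) = −ψ̄_i'(r)/r`. -/
noncomputable def psibar : ℕ → ℝ → ℝ
  | 0 => fun r => Real.exp r
  | i + 1 => fun r => -(deriv (psibar i) r) / r

/-- The radial operator `L_n` given by `(L_n g)(r) = g(r) − g''(r) − ((n−1)/r)·g'(r)`. -/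
noncomputable def Lop (n : ℕ) (g : ℝ → ℝ) : ℝ → ℝ :=
  fun r => g r - deriv (deriv g) r - (((n : ℝ) - 1) / r) * deriv g r

open Set Filter

lemma lop_smul (n : ℕ) (c : ℝ) (g : ℝ → ℝ) :
    Lop n (fun x => c * g x) = fun x => c * Lop n g x := by
  have h1 : deriv (fun x => c * g x) = fun x => c * deriv g x := by
    funext x; exact deriv_const_mul_field c
  have h2 : deriv (fun x => c * deriv g x) = fun x => c * deriv (deriv g) x := by
    funext x; exact deriv_const_mul_field c
  funext r
  simp only [Lop, h1, h2]
  ring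

lemma lop_zero (n : ℕ) : Lop n (fun _ => (0:ℝ)) = fun _ => (0:ℝ) := by
  funext r; simp [Lop]

lemma lop_iterate_zero (n k : ℕ) : (Lop n)^[k] (fun _ => (0:ℝ)) = fun _ => (0:ℝ) := by
  induction k with
  | zero => rfl
  | succ k ih => rw [Function.iterate_succ_apply, lop_zero, ih]

lemma lop_iterate_smul (n k : ℕ) (c : ℝ) (g : ℝ → ℝ) :
    (Lop n)^[k] (fun x => c * g x) = fun x => c * (Lop n)^[k] g x := by
  induction k generalizing g with
  | zero => rfl
  | succ k ih =>
      rw [Function.iterate_succ_apply, lop_smul, ih, Function.iterate_succ_apply]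

lemma lop_eqOn (n : ℕ) {f g : ℝ → ℝ} (h : EqOn f g (Ioi 0)) :
    EqOn (Lop n f) (Lop n g) (Ioi 0) := by
  intro r hr
  have hnh : f =ᶠ[nhds r] g := eventuallyEq_of_mem (isOpen_Ioi.mem_nhds hr) h
  have hd : deriv f =ᶠ[nhds r] deriv g := hnh.deriv
  simp only [Lop, hnh.self_of_nhds, hd.self_of_nhds, hd.deriv_eq]

lemma lop_iterate_eqOn (n k : ℕ) {f g : ℝ → ℝ} (h : EqOn f g (Ioi 0)) :
    EqOn ((Lop n)^[k] f) ((Lop n)^[k] g) (Ioi 0) := by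
  induction k generalizing f g with
  | zero => exact h
  | succ k ih =>
      rw [Function.iterate_succ_apply, Function.iterate_succ_apply]
      exact ih (lop_eqOn n h)

/-- The key analytic facts: `ψ̄_i` is differentiable on `(0,∞)` and its derivative
has derivative `ψ̄_i - (2i/r) ψ̄_i'` there (the ODE `Δ_{2i+1} ψ̄_i = ψ̄_i`). -/
lemma psibar_deriv (i : ℕ) : ∀ r : ℝ, 0 < r →
    HasDerivAt (psibar i) (deriv (psibar i) r) r ∧
    HasDerivAt (deriv (psibar i))
      (psibar i r - (2 * (i:ℝ)) / r * deriv (psibar i) r) r := by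
  induction i with
  | zero =>
      intro r hr
      have h0 : psibar 0 = Real.exp := rfl
      have hd : deriv (psibar 0) = Real.exp := by rw [h0, Real.deriv_exp]
      constructor
      · rw [hd, h0]; exact Real.hasDerivAt_exp r
      · rw [hd, h0]
        have : Real.exp r - 2 * ((0:ℕ):ℝ) / r * Real.exp r = Real.exp r := by
          simp
        rw [this]
        exact Real.hasDerivAt_exp r
  | succ i ih =>
      -- the function g equal to `deriv (psibar (i+1))` on (0,∞)
      set g : ℝ → ℝ := fun x => -(psibar i x) / x + (2 * (i:ℝ) + 1) * deriv (psibar i) x / x ^ 2 with hgdef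
      -- step 1: HasDerivAt (psibar (i+1)) at each x > 0, with value expressed via psibar i
      have hD : ∀ x : ℝ, 0 < x → HasDerivAt (psibar (i+1))
          ((-(psibar i x - (2 * (i:ℝ)) / x * deriv (psibar i) x) * x - -(deriv (psibar i) x) * 1) / x ^ 2) x := by
        intro x hx
        have hnum : HasDerivAt (fun y => -(deriv (psibar i) y))
            (-(psibar i x - (2 * (i:ℝ)) / x * deriv (psibar i) x)) x := (ih x hx).2.neg
        have : HasDerivAt (fun y => -(deriv (psibar i) y) / y)
            ((-(psibar i x - (2 * (i:ℝ)) / x * deriv (psibar i) x) * x - -(deriv (psibar i) x) * 1) / x ^ 2) x :=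
          hnum.div (hasDerivAt_id x) (ne_of_gt hx)
        exact this
      have hg : ∀ x : ℝ, 0 < x → deriv (psibar (i+1)) x = g x := by
        intro x hx
        rw [(hD x hx).deriv, hgdef]
        have hx' : x ≠ 0 := ne_of_gt hx
        field_simp
        ring
      intro r hr
      constructor
      · rw [hg r hr]
        have h := hD r hr
        convert h using 1
        have hr' : r ≠ 0 := ne_of_gt hr
        rw [hgdef]
        field_simp
        ring
      · have hr' : r ≠ 0 := ne_of_gt hr
        -- differentiate g at r
        have ht1 : HasDerivAt (fun x => -(psibar i x) / x)
            ((-(deriv (psibar i) r) * r - -(psibar i r) * 1) / r ^ 2) r :=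
          HasDerivAt.div (ih r hr).1.neg (hasDerivAt_id r) hr'
        have ht2 : HasDerivAt (fun x => (2 * (i:ℝ) + 1) * deriv (psibar i) x / x ^ 2)
            (((2 * (i:ℝ) + 1) * (psibar i r - (2 * (i:ℝ)) / r * deriv (psibar i) r) * r ^ 2 -
              (2 * (i:ℝ) + 1) * deriv (psibar i) r * (2 * r ^ 1)) / (r ^ 2) ^ 2) r := by
          exact HasDerivAt.div ((ih r hr).2.const_mul (2 * (i:ℝ) + 1))
            (hasDerivAt_pow 2 r) (pow_ne_zero 2 hr')
        have hgD : HasDerivAt g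
            ((-(deriv (psibar i) r) * r - -(psibar i r) * 1) / r ^ 2 +
             ((2 * (i:ℝ) + 1) * (psibar i r - (2 * (i:ℝ)) / r * deriv (psibar i) r) * r ^ 2 -
              (2 * (i:ℝ) + 1) * deriv (psibar i) r * (2 * r ^ 1)) / (r ^ 2) ^ 2) r := ht1.add ht2
        have heq : deriv (psibar (i+1)) =ᶠ[nhds r] g :=
          eventuallyEq_of_mem (isOpen_Ioi.mem_nhds hr) (fun x hx => hg x hx)
        have hgD' : HasDerivAt (deriv (psibar (i+1)))
            ((-(deriv (psibar i) r) * r - -(psibar i r) * 1) / r ^ 2 +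
             ((2 * (i:ℝ) + 1) * (psibar i r - (2 * (i:ℝ)) / r * deriv (psibar i) r) * r ^ 2 -
              (2 * (i:ℝ) + 1) * deriv (psibar i) r * (2 * r ^ 1)) / (r ^ 2) ^ 2) r :=
          hgD.congr_of_eventuallyEq heq
        convert hgD' using 1
        rw [hg r hr, hgdef]
        show psibar (i+1) r - _ = _
        have hps : psibar (i+1) r = -(deriv (psibar i) r) / r := rfl
        rw [hps]
        push_cast
        field_simp
        ring

/-- The key recurrence: `L_{2p+1} ψ̄_i = (2p − 2i) ψ̄_{i+1}` on `(0,∞)`. -/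
lemma lop_psibar (p i : ℕ) (r : ℝ) (hr : 0 < r) :
    Lop (2 * p + 1) (psibar i) r = (2 * (p:ℝ) - 2 * (i:ℝ)) * psibar (i+1) r := by
  have h := psibar_deriv i r hr
  have h2 : deriv (deriv (psibar i)) r = psibar i r - (2 * (i:ℝ)) / r * deriv (psibar i) r :=
    h.2.deriv
  have hps : psibar (i+1) r = -(deriv (psibar i) r) / r := rfl
  have hr' : r ≠ 0 := ne_of_gt hr
  simp only [Lop, h2, hps]
  push_cast
  field_simp
  ring

lemma lop_iterate_main (p : ℕ) : ∀ d i, i + d = p → ∀ m,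
    EqOn ((Lop (2 * p + 1))^[d + 1 + m] (psibar i)) (fun _ => (0:ℝ)) (Ioi 0) := by
  intro d
  induction d with
  | zero =>
      intro i hip m
      have hi : i = p := by omega
      have hk : 0 + 1 + m = m + 1 := by omega
      rw [hk, Function.iterate_succ_apply]
      have h1 : EqOn (Lop (2 * p + 1) (psibar i)) (fun _ => (0:ℝ)) (Ioi 0) := by
        intro x hx
        rw [lop_psibar p i x hx, hi]
        simp
      have h2 := lop_iterate_eqOn (2 * p + 1) m h1
      rw [lop_iterate_zero] at h2
      exact h2
  | succ d ih =>
      intro i hip m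
      have hk : d + 1 + 1 + m = (d + 1 + m) + 1 := by omega
      rw [hk, Function.iterate_succ_apply]
      have h1 : EqOn (Lop (2 * p + 1) (psibar i))
          (fun x => (2 * (p:ℝ) - 2 * (i:ℝ)) * psibar (i+1) x) (Ioi 0) :=
        fun x hx => lop_psibar p i x hx
      have h2 := lop_iterate_eqOn (2 * p + 1) (d + 1 + m) h1
      rw [lop_iterate_smul] at h2
      intro x hx
      have h3 := ih (i+1) (by omega) m
      have h4 : (Lop (2 * p + 1))^[d + 1 + m] (psibar (i+1)) x = 0 := h3 hx
      have h5 := h2 hx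
      simp only at h5 ⊢
      rw [h5, h4, mul_zero]

theorem Lop_iterate_psibar_eq_zero (p : ℕ) (i : ℕ) (hi : i ≤ p) (r : ℝ) (hr : 0 < r) :
    (Lop (2 * p + 1))^[p + 1] (psibar i) r = 0 := by
  have h := lop_iterate_main p (p - i) i (by omega) i
  have hk : p - i + 1 + i = p + 1 := by omega
  rw [hk] at h
  exact h (Set.mem_Ioi.mpr hr)
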